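/- arXiv:1409.7832 — 2 statements merged into one kernel-verified Lean document; each statement's English description precedes it below -/
import Mathlib

section
/- There is no bounded real-valued function f on the open unit disk 𝔻 ⊆ ℂ whose Laplacian satisfies ∇²f(z) = 1/(1 - |z|²)² for all z ∈ 𝔻. -/
/-!
If `|f| ≤ C` and `Δ f = (1 - |z|²)⁻²`, then `4 f + log (1 - |z|²)` is harmonic on the disc, because
`Δ log (1 - |z|²) = -4 (1 - |z|²)⁻²`. By the mean value property its value `4 f 0` at the centre is
its average over the circle of radius `r < 1`, which is at most `4 C + log (1 - r²)`; this tends to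
`-∞` as `r → 1`.
-/

/-- The Laplacian `∇² = ∂²/∂x² + ∂²/∂y²` of a function `f : ℂ → ℝ`,
expressed via real Fréchet derivatives in the directions `1` and `I`. -/
noncomputable def myLaplacian (f : ℂ → ℝ) (z : ℂ) : ℝ :=
  fderiv ℝ (fun w => fderiv ℝ f w 1) z 1 +
  fderiv ℝ (fun w => fderiv ℝ f w Complex.I) z Complex.I

open Metric Filter Topology InnerProductSpace Laplacian Real

theorem fderiv_fderiv_apply_comp_norm_sq {E : Type*} [NormedAddCommGroup E]
    [InnerProductSpace ℝ E] {h h' : ℝ → ℝ} {h'' : ℝ} {z : E}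
    (hh : ∀ᶠ s in 𝓝 (‖z‖ ^ 2), HasDerivAt h (h' s) s) (hh' : HasDerivAt h' h'' (‖z‖ ^ 2))
    (d : E) :
    fderiv ℝ (fun w => fderiv ℝ (fun x => h (‖x‖ ^ 2)) w d) z d =
      4 * h'' * inner ℝ z d ^ 2 + 2 * h' (‖z‖ ^ 2) * ‖d‖ ^ 2 := by
  have hnsq : ∀ w : E, HasFDerivAt (fun x : E => ‖x‖ ^ 2) (2 • innerSL ℝ w) w :=
    fun w => (hasStrictFDerivAt_norm_sq w).hasFDerivAt
  have hfirst : (fun w => fderiv ℝ (fun x => h (‖x‖ ^ 2)) w d) =ᶠ[𝓝 z]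
      fun w => h' (‖w‖ ^ 2) * (2 * inner ℝ w d) := by
    have hcont : Continuous fun x : E => ‖x‖ ^ 2 := by fun_prop
    filter_upwards [hcont.continuousAt.eventually hh] with w hw
    have hw' : HasFDerivAt (fun x => h (‖x‖ ^ 2)) _ w := hw.comp_hasFDerivAt w (hnsq w)
    simp [hw'.fderiv]
  have hsecond : HasFDerivAt (fun w : E => h' (‖w‖ ^ 2) * (2 * inner ℝ w d)) _ z :=
    (hh'.comp_hasFDerivAt z (hnsq z)).mul
      (((hasFDerivAt_id z).inner ℝ (hasFDerivAt_const d z)).const_mul 2)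
  rw [hfirst.fderiv_eq, hsecond.fderiv]
  simp only [add_apply, smul_apply, Function.comp_apply, ContinuousLinearMap.comp_apply,
    ContinuousLinearMap.prod_apply, ContinuousLinearMap.id_apply, zero_apply,
    fderivInnerCLM_apply, inner_zero_right, id_eq, real_inner_self_eq_norm_sq, zero_add,
    smul_eq_mul, coe_innerSL_apply, nsmul_eq_mul, Nat.cast_ofNat]
  ring

theorem myLaplacian_comp_norm_sq {h h' : ℝ → ℝ} {h'' : ℝ} {z : ℂ}
    (hh : ∀ᶠ s in 𝓝 (‖z‖ ^ 2), HasDerivAt h (h' s) s) (hh' : HasDerivAt h' h'' (‖z‖ ^ 2)) :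
    myLaplacian (fun w => h (‖w‖ ^ 2)) z = 4 * h' (‖z‖ ^ 2) + 4 * ‖z‖ ^ 2 * h'' := by
  rw [myLaplacian, fderiv_fderiv_apply_comp_norm_sq hh hh',
    fderiv_fderiv_apply_comp_norm_sq hh hh', Complex.sq_norm, Complex.normSq_apply]
  simp only [Complex.inner, Complex.mul_re, Complex.conj_re, Complex.conj_im, Complex.one_re,
    Complex.one_im, Complex.I_re, Complex.I_im, norm_one, Complex.norm_I]
  ring

theorem myLaplacian_eq_laplacian {f : ℂ → ℝ} {z : ℂ} (hf : ContDiffAt ℝ 2 f z) :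
    myLaplacian f z = Δ f z := by
  have hdf : DifferentiableAt ℝ (fderiv ℝ f) z :=
    (hf.fderiv_right (m := 1) le_rfl).differentiableAt one_ne_zero
  rw [laplacian_eq_iteratedFDeriv_complexPlane, myLaplacian]
  dsimp only
  rw [iteratedFDeriv_two_apply, iteratedFDeriv_two_apply,
    fderiv_clm_apply hdf (differentiableAt_const _),
    fderiv_clm_apply hdf (differentiableAt_const _)]
  simp only [fderiv_fun_const, Pi.zero_apply, ContinuousLinearMap.comp_zero, zero_add,
    ContinuousLinearMap.flip_apply, Matrix.cons_val_zero, Matrix.cons_val_one]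

theorem hasDerivAt_log_one_sub {s : ℝ} (hs : s ≠ 1) :
    HasDerivAt (fun s => log (1 - s)) (s - 1)⁻¹ s := by
  convert ((hasDerivAt_id' s).const_sub 1).log (sub_ne_zero.2 hs.symm) using 1
  rw [← neg_sub, inv_neg, neg_div, one_div]

theorem hasDerivAt_sub_one_inv {s : ℝ} (hs : s ≠ 1) :
    HasDerivAt (fun s => (s - 1)⁻¹) (-((s - 1) ^ 2)⁻¹) s :=
  (hasDerivAt_inv (sub_ne_zero.2 hs)).comp_sub_const s 1

theorem contDiffAt_log_one_sub_norm_sq {E : Type*} [NormedAddCommGroup E]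
    [InnerProductSpace ℝ E] {n : WithTop ℕ∞} {z : E} (hz : ‖z‖ < 1) :
    ContDiffAt ℝ n (fun w : E => log (1 - ‖w‖ ^ 2)) z :=
  (contDiffAt_const.sub (contDiff_norm_sq ℝ).contDiffAt).log
    (sub_ne_zero.2 (pow_lt_one₀ (norm_nonneg z) hz two_ne_zero).ne')

theorem laplacian_log_one_sub_norm_sq {z : ℂ} (hz : ‖z‖ < 1) :
    Δ (fun w : ℂ => log (1 - ‖w‖ ^ 2)) z = -4 / (1 - ‖z‖ ^ 2) ^ 2 := by
  have hz2 : ‖z‖ ^ 2 < 1 := pow_lt_one₀ (norm_nonneg z) hz two_ne_zero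
  rw [← myLaplacian_eq_laplacian (contDiffAt_log_one_sub_norm_sq hz),
    myLaplacian_comp_norm_sq ((eventually_ne_nhds hz2.ne).mono fun s => hasDerivAt_log_one_sub)
      (hasDerivAt_sub_one_inv hz2.ne)]
  have h1 : ‖z‖ ^ 2 - 1 ≠ 0 := by linarith
  have h2 : 1 - ‖z‖ ^ 2 ≠ 0 := by linarith
  field_simp
  ring

theorem harmonicOnNhd_four_mul_add_log_one_sub_norm_sq {f : ℂ → ℝ}
    (hf : ContDiffOn ℝ 2 f (ball 0 1))
    (hlap : ∀ z ∈ ball (0 : ℂ) 1, myLaplacian f z = 1 / (1 - ‖z‖ ^ 2) ^ 2) :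
    HarmonicOnNhd (fun z => 4 * f z + log (1 - ‖z‖ ^ 2)) (ball 0 1) := by
  have hf' : ∀ z ∈ ball (0 : ℂ) 1, ContDiffAt ℝ 2 f z := fun z hz =>
    hf.contDiffAt (isOpen_ball.mem_nhds hz)
  intro z hz
  refine ⟨(contDiffAt_const.mul (hf' z hz)).add
    (contDiffAt_log_one_sub_norm_sq (mem_ball_zero_iff.1 hz)), ?_⟩
  filter_upwards [isOpen_ball.mem_nhds hz] with w hw
  have hw1 : ‖w‖ < 1 := mem_ball_zero_iff.1 hw
  show Δ ((4 : ℝ) • f + fun w : ℂ => log (1 - ‖w‖ ^ 2)) w = 0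
  rw [ContDiffAt.laplacian_add (f₁ := (4 : ℝ) • f) ((hf' w hw).const_smul (4 : ℝ))
      (contDiffAt_log_one_sub_norm_sq hw1),
    laplacian_smul _ (hf' w hw), ← myLaplacian_eq_laplacian (hf' w hw), hlap w hw,
    laplacian_log_one_sub_norm_sq hw1]
  ring

theorem exists_log_one_sub_sq_lt (a : ℝ) : ∃ r, 0 ≤ r ∧ r < 1 ∧ log (1 - r ^ 2) < a := by
  set t := exp (min a 0 - 1)
  have ht0 : 0 < t := Real.exp_pos _
  have ht1 : t < 1 := Real.exp_lt_one_iff.2 (by linarith [min_le_right a 0])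
  refine ⟨√(1 - t), Real.sqrt_nonneg _, (Real.sqrt_lt' one_pos).2 (by linarith), ?_⟩
  rw [Real.sq_sqrt (by linarith), sub_sub_cancel, Real.log_exp]
  linarith [min_le_left a 0]

/-- There is no bounded (twice continuously differentiable) real-valued function `f`
on the open unit disk whose Laplacian satisfies `∇²f(z) = 1/(1 - |z|²)²` there. -/
theorem stmt_0 :
    ¬ ∃ (f : ℂ → ℝ) (C : ℝ),
      ContDiffOn ℝ 2 f (Metric.ball (0 : ℂ) 1) ∧
      (∀ z ∈ Metric.ball (0 : ℂ) 1, |f z| ≤ C) ∧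
      (∀ z ∈ Metric.ball (0 : ℂ) 1,
        myLaplacian f z = 1 / (1 - ‖z‖ ^ 2) ^ 2) := by
  rintro ⟨f, C, hf, hbound, hlap⟩
  obtain ⟨r, hr0, hr1, hlog⟩ := exists_log_one_sub_sq_lt (4 * (f 0 - C))
  have hsub : closedBall (0 : ℂ) |r| ⊆ ball 0 1 :=
    closedBall_subset_ball (by rwa [abs_of_nonneg hr0])
  have hF := (harmonicOnNhd_four_mul_add_log_one_sub_norm_sq hf hlap).mono hsub
  have hmean := hF.circleAverage_eq
  have hsphere : circleAverage (fun z => 4 * f z + log (1 - ‖z‖ ^ 2)) 0 r ≤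
      4 * C + log (1 - r ^ 2) := by
    refine circleAverage_mono_on_of_le_circle
      (hF.continuousOn.mono sphere_subset_closedBall).circleIntegrable' fun z hz => ?_
    rw [mem_sphere_zero_iff_norm.1 hz, abs_of_nonneg hr0]
    linarith [(le_abs_self _).trans (hbound z (hsub (sphere_subset_closedBall hz)))]
  simp only [norm_zero, ne_eq, OfNat.ofNat_ne_zero, not_false_eq_true, zero_pow, sub_zero,
    Real.log_one, add_zero] at hmean
  linarith
end

section
/- Let Q ⊆ H²(𝔻) be a closed subspace invariant under the backward shift M_z* (a quotient module), with Q ≠ {0}, and let C_z = P_Q M_z|_Q denote the compression of the shift to Q. Set L = ran(I_Q − C_z C_z*). Then Q equals the closed linear span of { P_Q M_z^ℓ x : ℓ ≥ 0, x ∈ L }. -/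
/-!
Write `u = P_Q 1`. Since `Q` is `M_z*`-invariant, `C_z* = M_z*|_Q`, and `M_z M_z* f = f - f(0)`,
so the defect operator is the rank-one map `w ↦ ⟪u, w⟫ u`, whose range contains `u`.
If `q ∈ Q` is orthogonal to every `P_Q M_z^ℓ u`, then
`0 = ⟪M_z^ℓ u, q⟫ = ⟪u, M_z*^ℓ q⟫ = (M_z*^ℓ q)(0) = q_ℓ` for all `ℓ`, so `q = 0`.
-/

open ContinuousLinearMap

/-- The Hardy space `H²(𝔻)`, modelled as `ℓ²(ℕ)` via Taylor coefficients. -/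
noncomputable abbrev Hardy : Type := lp (fun _ : ℕ => ℂ) 2

open scoped InnerProductSpace

noncomputable section

section Compression

variable {𝕜 E : Type*} [RCLike 𝕜] [NormedAddCommGroup E] [InnerProductSpace 𝕜 E]
  [CompleteSpace E]

abbrev compression (T : E →L[𝕜] E) (Q : Submodule 𝕜 E) [CompleteSpace Q] : Q →L[𝕜] Q :=
  Q.orthogonalProjectionOnto ∘L (T ∘L Q.subtypeL)

variable {T : E →L[𝕜] E} {Q : Submodule 𝕜 E}

theorem adjoint_pow_mem (hQ : ∀ x ∈ Q, adjoint T x ∈ Q) (ℓ : ℕ) {x : E} (hx : x ∈ Q) :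
    (adjoint T ^ ℓ) x ∈ Q := by
  induction ℓ with
  | zero => simpa using hx
  | succ k ih => rw [pow_succ', mul_apply_eq_comp]; exact hQ _ ih

variable [CompleteSpace Q]

theorem coe_adjoint_compression_apply (hQ : ∀ x ∈ Q, adjoint T x ∈ Q) (w : Q) :
    (adjoint (compression T Q) w : E) = adjoint T w := by
  rw [adjoint_comp, adjoint_comp, Q.adjoint_subtypeL, Q.adjoint_orthogonalProjectionOnto]
  exact Q.starProjection_eq_self_iff.mpr (hQ _ w.2)

theorem one_sub_compression_mul_adjoint_apply (hQ : ∀ x ∈ Q, adjoint T x ∈ Q) (w : Q) :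
    (1 - compression T Q ∘L adjoint (compression T Q)) w =
      Q.orthogonalProjectionOnto ((w : E) - T (adjoint T w)) := by
  rw [map_sub, Q.orthogonalProjectionOnto_mem_subspace_eq_self, sub_apply, one_apply_eq_self,
    comp_apply]
  change _ - Q.orthogonalProjectionOnto (T (adjoint (compression T Q) w : E)) = _
  rw [coe_adjoint_compression_apply hQ]

theorem inner_orthogonalProjectionOnto_pow_apply (ℓ : ℕ) (x : E) (q : Q) :
    ⟪Q.orthogonalProjectionOnto ((T ^ ℓ) x), q⟫_𝕜 = ⟪x, (adjoint T ^ ℓ) q⟫_𝕜 := by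
  rw [Q.inner_orthogonalProjectionOnto_eq_of_mem_right, ← adjoint_inner_right, ← star_eq_adjoint,
    star_pow, star_eq_adjoint]

end Compression

theorem mem_range_of_apply_eq_inner_smul {𝕜 E : Type*} [RCLike 𝕜] [NormedAddCommGroup E]
    [InnerProductSpace 𝕜 E] {D : E →ₗ[𝕜] E} {u : E} (hD : ∀ w, D w = ⟪u, w⟫_𝕜 • u) :
    u ∈ LinearMap.range D := by
  refine ⟨(⟪u, u⟫_𝕜)⁻¹ • u, ?_⟩
  rcases eq_or_ne u 0 with rfl | hu
  · simp
  · rw [hD, inner_smul_right, inv_mul_cancel₀ (inner_self_ne_zero.mpr hu), one_smul]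

def Hardy.monomial (n : ℕ) : Hardy := lp.single 2 n 1

theorem Hardy.inner_monomial_left (n : ℕ) (f : Hardy) : ⟪Hardy.monomial n, f⟫_ℂ = f n := by
  simp [Hardy.monomial, lp.inner_single_left]

structure IsUnilateralShift (S : Hardy →L[ℂ] Hardy) : Prop where
  apply_zero : ∀ f : Hardy, (S f : ℕ → ℂ) 0 = 0
  apply_succ : ∀ (f : Hardy) (n : ℕ), (S f : ℕ → ℂ) (n + 1) = (f : ℕ → ℂ) n

namespace IsUnilateralShift

open Hardy

variable {S : Hardy →L[ℂ] Hardy} (hS : IsUnilateralShift S)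
include hS

theorem apply_monomial (n : ℕ) : S (monomial n) = monomial (n + 1) := by
  ext (_ | m)
  · simp [hS.apply_zero, monomial, lp.single_apply]
  · simp [hS.apply_succ, monomial, lp.single_apply, Pi.single_apply]

theorem adjoint_apply (f : Hardy) (n : ℕ) : (adjoint S f : ℕ → ℂ) n = f (n + 1) := by
  rw [← inner_monomial_left, adjoint_inner_right, hS.apply_monomial, inner_monomial_left]

theorem adjoint_pow_apply (ℓ : ℕ) (f : Hardy) (n : ℕ) :
    ((adjoint S ^ ℓ) f : ℕ → ℂ) n = f (n + ℓ) := by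
  induction ℓ generalizing f n with
  | zero => simp
  | succ k ih => rw [pow_succ, mul_apply_eq_comp, ih, hS.adjoint_apply, add_assoc]

theorem apply_adjoint_apply (f : Hardy) : S (adjoint S f) = f - f 0 • monomial 0 := by
  ext (_ | m) <;> rw [lp.coeFn_sub, lp.coeFn_smul, Pi.sub_apply, Pi.smul_apply]
  · rw [hS.apply_zero]; simp [monomial, lp.single_apply]
  · rw [hS.apply_succ, hS.adjoint_apply]; simp [monomial, lp.single_apply]

theorem one_sub_compression_mul_adjoint_apply {Q : Submodule ℂ Hardy} [CompleteSpace Q]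
    (hQ : ∀ x ∈ Q, adjoint S x ∈ Q) (w : Q) :
    (1 - compression S Q ∘L adjoint (compression S Q)) w =
      ⟪Q.orthogonalProjectionOnto (monomial 0), w⟫_ℂ • Q.orthogonalProjectionOnto (monomial 0) := by
  rw [_root_.one_sub_compression_mul_adjoint_apply hQ, hS.apply_adjoint_apply, sub_sub_cancel,
    map_smul, Q.inner_orthogonalProjectionOnto_eq_of_mem_right, inner_monomial_left]

end IsUnilateralShift

theorem stmt_16_general
    (S : Hardy →L[ℂ] Hardy)
    (hS0 : ∀ f : Hardy, (S f : ℕ → ℂ) 0 = 0)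
    (hS : ∀ (f : Hardy) (n : ℕ), (S f : ℕ → ℂ) (n + 1) = (f : ℕ → ℂ) n)
    (Q : Submodule ℂ Hardy) [CompleteSpace Q]
    (hQinv : ∀ x ∈ Q, adjoint S x ∈ Q) :
    (⊤ : Submodule ℂ Q) =
      (Submodule.span ℂ
        {y : Q | ∃ (ℓ : ℕ) (x : Q),
          x ∈ LinearMap.range
            (((1 : Q →L[ℂ] Q) -
              ((Q.orthogonalProjectionOnto) ∘L (S ∘L Q.subtypeL)) ∘L
                adjoint ((Q.orthogonalProjectionOnto) ∘L (S ∘L Q.subtypeL)) : Q →L[ℂ] Q) : Q →ₗ[ℂ] Q) ∧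
          y = Q.orthogonalProjectionOnto ((S ^ ℓ) (x : Hardy))}).topologicalClosure := by
  have hShift : IsUnilateralShift S := ⟨hS0, hS⟩
  set u : Q := Q.orthogonalProjectionOnto (Hardy.monomial 0)
  have hu : u ∈ LinearMap.range ((1 - compression S Q ∘L adjoint (compression S Q) :
      Q →L[ℂ] Q) : Q →ₗ[ℂ] Q) :=
    mem_range_of_apply_eq_inner_smul (hShift.one_sub_compression_mul_adjoint_apply hQinv)
  symm
  rw [Submodule.topologicalClosure_eq_top_iff, Submodule.eq_bot_iff]
  intro q hq
  rw [← Submodule.coe_eq_zero]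
  ext ℓ
  have hℓ : (adjoint S ^ ℓ) q ∈ Q := adjoint_pow_mem hQinv ℓ q.2
  calc (q : ℕ → ℂ) ℓ = ⟪u, (⟨_, hℓ⟩ : Q)⟫_ℂ := by
        rw [Q.inner_orthogonalProjectionOnto_eq_of_mem_right, Hardy.inner_monomial_left,
          hShift.adjoint_pow_apply, zero_add]
    _ = ⟪Q.orthogonalProjectionOnto ((S ^ ℓ) u), q⟫_ℂ :=
        (inner_orthogonalProjectionOnto_pow_apply ℓ _ q).symm
    _ = 0 := Submodule.inner_right_of_mem_orthogonal (Submodule.subset_span ?_) hq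
  exact ⟨ℓ, u, hu, rfl⟩

/-- Let `Q` be a nonzero quotient module of `H²(𝔻)` (a closed subspace invariant under
the backward shift `M_z*`), `C_z = P_Q M_z|_Q` the compressed shift, and
`L = ran (I_Q - C_z C_z*)`. Then `Q` is the closed linear span of
`{ P_Q M_z^ℓ x : ℓ ≥ 0, x ∈ L }`. Here `S` is the unilateral shift `M_z` on the
coefficient model of `H²(𝔻)`. -/
theorem stmt_16
    (S : Hardy →L[ℂ] Hardy)
    (hS0 : ∀ f : Hardy, (S f : ℕ → ℂ) 0 = 0)
    (hS : ∀ (f : Hardy) (n : ℕ), (S f : ℕ → ℂ) (n + 1) = (f : ℕ → ℂ) n)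
    (Q : Submodule ℂ Hardy) [CompleteSpace Q]
    (hQinv : ∀ x ∈ Q, adjoint S x ∈ Q) (hQne : Q ≠ ⊥) :
    (⊤ : Submodule ℂ Q) =
      (Submodule.span ℂ
        {y : Q | ∃ (ℓ : ℕ) (x : Q),
          x ∈ LinearMap.range
            (((1 : Q →L[ℂ] Q) -
              ((Q.orthogonalProjectionOnto) ∘L (S ∘L Q.subtypeL)) ∘L
                adjoint ((Q.orthogonalProjectionOnto) ∘L (S ∘L Q.subtypeL)) : Q →L[ℂ] Q) : Q →ₗ[ℂ] Q) ∧
          y = Q.orthogonalProjectionOnto ((S ^ ℓ) (x : Hardy))}).topologicalClosure :=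
  stmt_16_general S hS0 hS Q hQinv
end
end
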